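/- Σ₁ ⊆ (Σ₀ + ch(S)) ∩ (ch(Σ₀) + S). -/

import Mathlib

/-!
Choose `(x, ω)` at which both almost sure spectra are attained and every `ω n` lies in `S` (the
support carries full `ν`-mass, so this holds `ν^ℤ`-almost surely). Then `H_{x,ω} = H_x + V` with
`V` the multiplication by `ω`.

For the first inclusion write `[inf S, sup S] = [m - r, m + r]`: then `‖V - m‖ ≤ r`, and since
`‖(H_x - z) ψ‖ ≥ dist(z, σ(H_x)) ‖ψ‖` for self-adjoint `H_x`, every `l` with
`dist(l - m, σ(H_x)) > r` stays in the resolvent set. For the second, if `l` is `δ`-far from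
`ch(Σ₀) + S`, then at each site `l - ω n` is either `≥ sup Σ₀ + δ` or `≤ inf Σ₀ - δ`; splitting
`ψ` along these two sets of sites, `l - H_{x,ω}` is `≥ δ` as a form on one part and `≤ -δ` on the
other, which forces `‖(l - H_{x,ω}) ψ‖ ≥ δ ‖ψ‖`.
-/

open MeasureTheory Topology
open scoped Pointwise ENNReal InnerProductSpace

namespace ContinuousLinearMap

section Normed

variable {F : Type*} [NormedAddCommGroup F] [NormedSpace ℝ F]

lemma exists_pos_mul_norm_le_norm_apply_of_isUnit {A : F →L[ℝ] F} (hA : IsUnit A) :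
    ∃ ε > 0, ∀ x, ε * ‖x‖ ≤ ‖A x‖ := by
  obtain ⟨u, rfl⟩ := hA
  set B : F →L[ℝ] F := ↑u⁻¹
  refine ⟨(‖B‖ + 1)⁻¹, by positivity, fun x => ?_⟩
  rw [inv_mul_le_iff₀ (by positivity)]
  calc ‖x‖ = ‖B (u.val x)‖ := by rw [← comp_apply, ← mul_def, u.inv_mul, one_apply_eq_self]
    _ ≤ ‖B‖ * ‖u.val x‖ := le_opNorm _ _
    _ ≤ (‖B‖ + 1) * ‖u.val x‖ := by gcongr; linarith

end Normed

variable {E : Type*} [NormedAddCommGroup E] [InnerProductSpace ℝ E]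

lemma inner_algebraMap_sub_apply_self (A : E →L[ℝ] E) (c : ℝ) (x : E) :
    ⟪(algebraMap ℝ (E →L[ℝ] E) c - A) x, x⟫_ℝ = c * ‖x‖ ^ 2 - ⟪A x, x⟫_ℝ := by
  rw [sub_apply, algebraMap_apply, inner_sub_left, real_inner_smul_left,
    real_inner_self_eq_norm_sq]

lemma norm_apply_sq_le_of_isPositive {A : E →L[ℝ] E} (hA : A.IsPositive) (x : E) :
    ‖A x‖ ^ 2 ≤ ‖A‖ * ⟪A x, x⟫_ℝ := by
  have hsymm : ⟪A (A x), x⟫_ℝ = ‖A x‖ ^ 2 := by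
    rw [hA.isSymmetric.apply_clm, real_inner_self_eq_norm_sq]
  -- `t ↦ ⟪A (x + t • A x), x + t • A x⟫` is a nonnegative quadratic: its discriminant is `≤ 0`
  have hq : ∀ t : ℝ,
      0 ≤ ⟪A (A x), A x⟫_ℝ * (t * t) + (2 * ‖A x‖ ^ 2) * t + ⟪A x, x⟫_ℝ := by
    intro t
    have := hA.inner_nonneg_left (x + t • A x)
    simp only [map_add, map_smul, inner_add_left, inner_add_right, real_inner_smul_left,
      real_inner_smul_right, hsymm, real_inner_self_eq_norm_sq] at this
    linarith
  have hdisc := discrim_le_zero hq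
  have hAAx : ⟪A (A x), A x⟫_ℝ ≤ ‖A‖ * ‖A x‖ ^ 2 := by
    calc ⟪A (A x), A x⟫_ℝ ≤ ‖A (A x)‖ * ‖A x‖ := real_inner_le_norm _ _
      _ ≤ ‖A‖ * ‖A x‖ * ‖A x‖ := by gcongr; exact le_opNorm _ _
      _ = ‖A‖ * ‖A x‖ ^ 2 := by ring
  rw [discrim] at hdisc
  have hpos := hA.inner_nonneg_left x
  have hsq : ‖A x‖ ^ 2 * ‖A x‖ ^ 2 ≤ ‖A x‖ ^ 2 * (‖A‖ * ⟪A x, x⟫_ℝ) := by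
    nlinarith [mul_le_mul_of_nonneg_right hAAx hpos]
  rcases (sq_nonneg ‖A x‖).eq_or_lt with h0 | h0
  · rw [← h0]
    exact mul_nonneg (norm_nonneg A) hpos
  · exact le_of_mul_le_mul_left hsq h0

lemma IsPositive.exists_pos_mul_norm_sq_le_inner_of_isUnit {A : E →L[ℝ] E} (hA : A.IsPositive)
    (hu : IsUnit A) : ∃ c > 0, ∀ x, c * ‖x‖ ^ 2 ≤ ⟪A x, x⟫_ℝ := by
  obtain ⟨ε, hε, hεA⟩ := exists_pos_mul_norm_le_norm_apply_of_isUnit hu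
  refine ⟨ε ^ 2 / (‖A‖ + 1), by positivity, fun x => ?_⟩
  have hpos := hA.inner_nonneg_left x
  rw [div_mul_eq_mul_div, div_le_iff₀ (by positivity)]
  calc ε ^ 2 * ‖x‖ ^ 2 = (ε * ‖x‖) ^ 2 := by ring
    _ ≤ ‖A x‖ ^ 2 := by gcongr; exact hεA x
    _ ≤ ‖A‖ * ⟪A x, x⟫_ℝ := norm_apply_sq_le_of_isPositive hA x
    _ ≤ ⟪A x, x⟫_ℝ * (‖A‖ + 1) := by nlinarith

variable [CompleteSpace E]

lemma isUnit_of_forall_mul_norm_le_norm_apply {A : E →L[ℝ] E} (hA : IsSelfAdjoint A)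
    {δ : ℝ} (hδ : 0 < δ) (h : ∀ x, δ * ‖x‖ ≤ ‖A x‖) : IsUnit A := by
  have hanti : AntilipschitzWith (⟨δ, hδ.le⟩ : NNReal)⁻¹ A :=
    A.antilipschitz_of_bound fun x => by
      show ‖x‖ ≤ δ⁻¹ * ‖A x‖
      rw [inv_mul_eq_div, le_div_iff₀ hδ, mul_comm]
      exact h x
  rw [isUnit_iff_bijective, bijective_iff_dense_range_and_antilipschitz]
  refine ⟨?_, _, hanti⟩
  rw [Submodule.topologicalClosure_eq_top_iff, orthogonal_range, hA.adjoint_eq]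
  exact LinearMap.ker_eq_bot.mpr hanti.injective

lemma inner_apply_self_le_of_spectrum_subset_Iic {A : E →L[ℝ] E} (hA : IsSelfAdjoint A) {b : ℝ}
    (h : spectrum ℝ A ⊆ Set.Iic b) (x : E) : ⟪A x, x⟫_ℝ ≤ b * ‖x‖ ^ 2 := by
  set s : Set ℝ := Set.Ici b ∩ {c | ∀ y, ⟪A y, y⟫_ℝ ≤ c * ‖y‖ ^ 2}
  have hs_closed : IsClosed s := by
    refine isClosed_Ici.inter ?_
    simp only [Set.ofPred_forall]
    exact isClosed_iInter fun y =>
      isClosed_le continuous_const (continuous_id.mul continuous_const)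
  have hs_ne : s.Nonempty := by
    refine ⟨max b ‖A‖, Set.mem_Ici.mpr (le_max_left _ _), fun y => ?_⟩
    calc ⟪A y, y⟫_ℝ ≤ ‖A y‖ * ‖y‖ := real_inner_le_norm _ _
      _ ≤ ‖A‖ * ‖y‖ * ‖y‖ := by gcongr; exact le_opNorm _ _
      _ ≤ max b ‖A‖ * ‖y‖ ^ 2 := by rw [mul_assoc, ← sq]; gcongr; exact le_max_right _ _
  have hs_bdd : BddBelow s := ⟨b, fun c hc => hc.1⟩
  have hM : sInf s ∈ s := hs_closed.csInf_mem hs_ne hs_bdd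
  suffices hMb : sInf s ≤ b from (hM.2 x).trans (by gcongr)
  by_contra! hbM
  -- `sInf s - A` is positive, and invertible as `sInf s ∉ spectrum ℝ A`; its coercivity then
  -- puts a number smaller than `sInf s` into `s`
  have hpos : (algebraMap ℝ (E →L[ℝ] E) (sInf s) - A).IsPositive := by
    refine isPositive_def'.mpr ⟨((IsSelfAdjoint.all _).algebraMap _).sub hA, fun y => ?_⟩
    rw [reApplyInnerSelf_apply, RCLike.re_to_real, inner_algebraMap_sub_apply_self, sub_nonneg]
    exact hM.2 y
  have hunit : IsUnit (algebraMap ℝ (E →L[ℝ] E) (sInf s) - A) :=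
    spectrum.notMem_iff.mp fun hmem => (h hmem).not_gt hbM
  obtain ⟨c, hc, hcoer⟩ := hpos.exists_pos_mul_norm_sq_le_inner_of_isUnit hunit
  have hmem : max b (sInf s - c) ∈ s := by
    refine ⟨Set.mem_Ici.mpr (le_max_left _ _), fun y => ?_⟩
    have := hcoer y
    rw [inner_algebraMap_sub_apply_self] at this
    calc ⟪A y, y⟫_ℝ ≤ (sInf s - c) * ‖y‖ ^ 2 := by linarith
      _ ≤ max b (sInf s - c) * ‖y‖ ^ 2 := by gcongr; exact le_max_right _ _
  exact (csInf_le hs_bdd hmem).not_gt (max_lt hbM (by linarith))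

lemma le_inner_apply_self_of_spectrum_subset_Ici {A : E →L[ℝ] E} (hA : IsSelfAdjoint A) {a : ℝ}
    (h : spectrum ℝ A ⊆ Set.Ici a) (x : E) : a * ‖x‖ ^ 2 ≤ ⟪A x, x⟫_ℝ := by
  have hneg : spectrum ℝ (-A) ⊆ Set.Iic (-a) := by
    rw [← spectrum.neg_eq]
    exact fun t ht => Set.mem_Iic.mpr (le_neg.mp (h ht))
  have := inner_apply_self_le_of_spectrum_subset_Iic hA.neg hneg x
  rw [neg_apply, inner_neg_left] at this
  linarith

lemma inner_sq_apply_self {A : E →L[ℝ] E} (hA : IsSelfAdjoint A) (x : E) :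
    ⟪(A ^ 2) x, x⟫_ℝ = ‖A x‖ ^ 2 := by
  rw [sq, ← real_inner_self_eq_norm_sq, ← hA.isSymmetric.apply_clm]
  rfl

lemma spectrum_sq_subset_Ici {A : E →L[ℝ] E} (hA : IsSelfAdjoint A) {d : ℝ} (hd : 0 ≤ d)
    (h : ∀ t ∈ spectrum ℝ A, d ≤ |t|) : spectrum ℝ (A ^ 2) ⊆ Set.Ici (d ^ 2) := by
  intro s hs
  rw [Set.mem_Ici]
  by_contra! hsd
  refine spectrum.mem_iff.mp hs ?_
  rcases lt_or_ge s 0 with hs0 | hs0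
  · refine isUnit_of_forall_le_norm_inner_map _ (c := (-s).toNNReal)
      (Real.toNNReal_pos.mpr (by linarith)) fun x => ?_
    rw [inner_algebraMap_sub_apply_self, inner_sq_apply_self hA, Real.norm_eq_abs,
      abs_of_nonpos (by nlinarith [sq_nonneg ‖x‖, sq_nonneg ‖A x‖]),
      Real.coe_toNNReal _ (by linarith)]
    nlinarith [sq_nonneg ‖A x‖]
  · set u := √s
    have hu : u < d := Real.sqrt_sq hd ▸ Real.sqrt_lt_sqrt hs0 hsd
    have hmem : ∀ t, |t| = u → t ∉ spectrum ℝ A := fun t ht hts => (h t hts).not_gt (ht ▸ hu)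
    have hsub : IsUnit (algebraMap ℝ (E →L[ℝ] E) u - A) :=
      spectrum.notMem_iff.mp (hmem u (abs_of_nonneg (Real.sqrt_nonneg s)))
    have hadd : IsUnit (algebraMap ℝ (E →L[ℝ] E) u + A) := by
      have := (spectrum.notMem_iff.mp (hmem (-u) (by simp [u]))).neg
      rwa [map_neg, neg_sub, sub_neg_eq_add, add_comm] at this
    have hfactor : algebraMap ℝ (E →L[ℝ] E) s - A ^ 2
        = (algebraMap ℝ (E →L[ℝ] E) u - A) * (algebraMap ℝ (E →L[ℝ] E) u + A) := by
      rw [← Real.mul_self_sqrt hs0, map_mul, sub_mul, mul_add, mul_add, ← Algebra.commutes u A]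
      noncomm_ring
    exact hfactor ▸ hsub.mul hadd

lemma mul_norm_le_norm_sub_algebraMap_apply {A : E →L[ℝ] E} (hA : IsSelfAdjoint A) {c d : ℝ}
    (hd : 0 ≤ d) (h : ∀ t ∈ spectrum ℝ A, d ≤ |t - c|) (x : E) :
    d * ‖x‖ ≤ ‖(A - algebraMap ℝ (E →L[ℝ] E) c) x‖ := by
  set T := A - algebraMap ℝ (E →L[ℝ] E) c
  have hT : IsSelfAdjoint T := hA.sub ((IsSelfAdjoint.all c).algebraMap _)
  have hspec : ∀ t ∈ spectrum ℝ T, d ≤ |t| := by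
    intro t ht
    rw [← spectrum.sub_singleton_eq, Set.sub_singleton] at ht
    obtain ⟨t, ht, rfl⟩ := ht
    exact h t ht
  have := le_inner_apply_self_of_spectrum_subset_Ici (hT.pow 2)
    (spectrum_sq_subset_Ici hT hd hspec) x
  rw [inner_sq_apply_self hT, ← mul_pow] at this
  exact (pow_le_pow_iff_left₀ (by positivity) (norm_nonneg _) two_ne_zero).mp this

lemma mul_norm_le_norm_apply_add_of_inner_eq_zero {T : E →L[ℝ] E} (hT : IsSelfAdjoint T)
    {u v : E} (huv : ⟪u, v⟫_ℝ = 0) {δ : ℝ} (hu : δ * ‖u‖ ^ 2 ≤ ⟪T u, u⟫_ℝ)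
    (hv : ⟪T v, v⟫_ℝ ≤ -δ * ‖v‖ ^ 2) : δ * ‖u + v‖ ≤ ‖T (u + v)‖ := by
  have hnorm_add : ‖u + v‖ ^ 2 = ‖u‖ ^ 2 + ‖v‖ ^ 2 := by
    rw [sq, sq, sq, norm_add_sq_eq_norm_sq_add_norm_sq_real huv]
  have hnorm_sub : ‖u - v‖ = ‖u + v‖ := by
    rw [← sq_eq_sq₀ (norm_nonneg _) (norm_nonneg _), hnorm_add, sq, sq, sq,
      norm_sub_sq_eq_norm_sq_add_norm_sq_real huv]
  -- pairing with the reflected vector `u - v` makes the two diagonal terms add up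
  have hpair : δ * ‖u + v‖ ^ 2 ≤ ⟪T (u + v), u - v⟫_ℝ := by
    have hcross : ⟪T u, v⟫_ℝ = ⟪T v, u⟫_ℝ := by
      rw [hT.isSymmetric.apply_clm, real_inner_comm]
    rw [map_add, inner_add_left, inner_sub_right, inner_sub_right, hcross, hnorm_add]
    linarith
  rcases (norm_nonneg (u + v)).eq_or_lt with h0 | h0
  · rw [← h0, mul_zero]
    exact norm_nonneg _
  · refine le_of_mul_le_mul_right ?_ h0
    calc δ * ‖u + v‖ * ‖u + v‖ = δ * ‖u + v‖ ^ 2 := by ring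
      _ ≤ ⟪T (u + v), u - v⟫_ℝ := hpair
      _ ≤ ‖T (u + v)‖ * ‖u + v‖ := hnorm_sub ▸ real_inner_le_norm _ _

theorem spectrum_subset_add_Icc_of_norm_sub_le {A A' : E →L[ℝ] E} (hA : IsSelfAdjoint A)
    (hA' : IsSelfAdjoint A') {m r : ℝ} (hr : ‖A' - A - algebraMap ℝ (E →L[ℝ] E) m‖ ≤ r) :
    spectrum ℝ A' ⊆ spectrum ℝ A + Set.Icc (m - r) (m + r) := by
  intro l hl
  by_contra hl'
  have hfar : ∀ t ∈ spectrum ℝ A, r < |t - (l - m)| := by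
    intro t ht
    by_contra! hle
    obtain ⟨h₁, h₂⟩ := abs_le.mp hle
    exact hl' ⟨t, ht, l - t, ⟨by linarith, by linarith⟩, by ring⟩
  obtain ⟨d, hrd, hd⟩ := (spectrum.isCompact A).exists_forall_le'
    (continuous_abs.comp (continuous_sub_right _)).continuousOn hfar
  have hr0 : 0 ≤ r := (norm_nonneg _).trans hr
  set R := A' - A - algebraMap ℝ (E →L[ℝ] E) m
  set B := A - algebraMap ℝ (E →L[ℝ] E) (l - m)
  have hsplit : algebraMap ℝ (E →L[ℝ] E) l - A' = -B - R := by
    simp only [B, R, map_sub]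
    abel
  have hbound : ∀ x, (d - r) * ‖x‖ ≤ ‖(algebraMap ℝ (E →L[ℝ] E) l - A') x‖ := by
    intro x
    have hB := mul_norm_le_norm_sub_algebraMap_apply hA (by linarith) hd x
    have hR : ‖R x‖ ≤ r * ‖x‖ := (le_opNorm _ _).trans (by gcongr)
    calc (d - r) * ‖x‖ ≤ ‖-B x‖ - ‖R x‖ := by rw [norm_neg]; linarith
      _ ≤ ‖(algebraMap ℝ (E →L[ℝ] E) l - A') x‖ := by
        rw [hsplit, sub_apply (-B), neg_apply]
        exact norm_sub_norm_le _ _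
  exact spectrum.mem_iff.mp hl <| isUnit_of_forall_mul_norm_le_norm_apply
    (((IsSelfAdjoint.all l).algebraMap _).sub hA') (by linarith) hbound

end ContinuousLinearMap

local notation "ℓ²(" ι ")" => lp (fun _ : ι => ℝ) 2

namespace lp

variable {ι : Type*}

lemma real_inner_eq_tsum (u v : ℓ²(ι)) : ⟪u, v⟫_ℝ = ∑' n, u n * v n := by
  simp [lp.inner_eq_tsum, mul_comm]

noncomputable def indicator (s : Set ι) (ψ : ℓ²(ι)) : ℓ²(ι) :=
  ⟨s.indicator ψ, (lp.memℓp ψ).mono' (norm_indicator_le_norm_self _)⟩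

@[simp]
lemma coe_indicator (s : Set ι) (ψ : ℓ²(ι)) : ⇑(indicator s ψ) = s.indicator ψ := rfl

lemma indicator_add_indicator_compl (s : Set ι) (ψ : ℓ²(ι)) :
    indicator s ψ + indicator sᶜ ψ = ψ :=
  lp.ext (s.indicator_self_add_compl ψ)

lemma inner_indicator_indicator_compl (s : Set ι) (ψ : ℓ²(ι)) :
    ⟪indicator s ψ, indicator sᶜ ψ⟫_ℝ = 0 := by
  rw [real_inner_eq_tsum]
  refine (tsum_congr fun n => ?_).trans tsum_zero
  by_cases hn : n ∈ s <;> simp [hn]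

lemma inner_apply_self_le_of_diag {D : ℓ²(ι) →L[ℝ] ℓ²(ι)} {ω : ι → ℝ}
    (hD : ∀ ψ n, D ψ n = ω n * ψ n) {c : ℝ} {u : ℓ²(ι)} (h : ∀ n, u n ≠ 0 → ω n ≤ c) :
    ⟪D u, u⟫_ℝ ≤ c * ‖u‖ ^ 2 := by
  have hnonneg : 0 ≤ ⟪(algebraMap ℝ _ c - D) u, u⟫_ℝ := by
    rw [real_inner_eq_tsum]
    refine tsum_nonneg fun n => ?_
    rcases eq_or_ne (u n) 0 with hn | hn
    · simp [hn]
    · have := h n hn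
      simp only [sub_apply, ContinuousLinearMap.algebraMap_apply,
        lp.coeFn_sub, lp.coeFn_smul, Pi.sub_apply, Pi.smul_apply, smul_eq_mul, hD]
      nlinarith [mul_self_nonneg (u n)]
  rw [ContinuousLinearMap.inner_algebraMap_sub_apply_self] at hnonneg
  linarith

lemma le_inner_apply_self_of_diag {D : ℓ²(ι) →L[ℝ] ℓ²(ι)} {ω : ι → ℝ}
    (hD : ∀ ψ n, D ψ n = ω n * ψ n) {c : ℝ} {u : ℓ²(ι)} (h : ∀ n, u n ≠ 0 → c ≤ ω n) :
    c * ‖u‖ ^ 2 ≤ ⟪D u, u⟫_ℝ := by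
  have := inner_apply_self_le_of_diag (D := -D) (ω := -ω) (c := -c)
    (fun ψ n => by simp [hD]) fun n hn => neg_le_neg (h n hn)
  rw [neg_apply, inner_neg_left] at this
  linarith

open ContinuousLinearMap in
theorem spectrum_subset_add_Icc_of_diag [Nonempty ι] {H H' : ℓ²(ι) →L[ℝ] ℓ²(ι)}
    (hH : IsSelfAdjoint H) (hH' : IsSelfAdjoint H') {ω : ι → ℝ}
    (hV : ∀ ψ n, (H' - H) ψ n = ω n * ψ n) {a b : ℝ} (hω : ∀ n, ω n ∈ Set.Icc a b) :
    spectrum ℝ H' ⊆ spectrum ℝ H + Set.Icc a b := by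
  obtain ⟨n₀⟩ := ‹Nonempty ι›
  have hr : 0 ≤ (b - a) / 2 := by linarith [(hω n₀).1, (hω n₀).2]
  have hnorm : ‖H' - H - algebraMap ℝ _ ((a + b) / 2)‖ ≤ (b - a) / 2 := by
    refine opNorm_le_bound _ hr fun ψ => ?_
    rw [← Real.norm_of_nonneg hr, ← norm_smul]
    refine lp.norm_mono two_ne_zero fun n => ?_
    have hcoord : (H' - H - algebraMap ℝ _ ((a + b) / 2)) ψ n = (ω n - (a + b) / 2) * ψ n := by
      rw [sub_apply (H' - H), lp.coeFn_sub, Pi.sub_apply, hV, ContinuousLinearMap.algebraMap_apply,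
        lp.coeFn_smul, Pi.smul_apply, smul_eq_mul, sub_mul]
    rw [hcoord, lp.coeFn_smul, Pi.smul_apply, norm_mul, norm_smul]
    gcongr
    rw [Real.norm_eq_abs, Real.norm_of_nonneg hr, abs_le]
    constructor <;> linarith [(hω n).1, (hω n).2]
  convert spectrum_subset_add_Icc_of_norm_sub_le hH hH' hnorm using 3 <;> ring

open ContinuousLinearMap in
theorem spectrum_subset_Icc_add_of_diag {H H' : ℓ²(ι) →L[ℝ] ℓ²(ι)}
    (hH : IsSelfAdjoint H) (hH' : IsSelfAdjoint H') {ω : ι → ℝ}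
    (hV : ∀ ψ n, (H' - H) ψ n = ω n * ψ n) {S : Set ℝ} (hS : IsCompact S)
    (hωS : ∀ n, ω n ∈ S) :
    spectrum ℝ H' ⊆ Set.Icc (sInf (spectrum ℝ H)) (sSup (spectrum ℝ H)) + S := by
  set a := sInf (spectrum ℝ H)
  set b := sSup (spectrum ℝ H)
  have hK : IsCompact (spectrum ℝ H) := spectrum.isCompact H
  have hHa : ∀ ψ, a * ‖ψ‖ ^ 2 ≤ ⟪H ψ, ψ⟫_ℝ :=
    le_inner_apply_self_of_spectrum_subset_Ici hH fun t ht => csInf_le hK.bddBelow ht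
  have hHb : ∀ ψ, ⟪H ψ, ψ⟫_ℝ ≤ b * ‖ψ‖ ^ 2 :=
    inner_apply_self_le_of_spectrum_subset_Iic hH fun t ht => le_csSup hK.bddAbove ht
  intro l hl
  by_contra hl'
  have hout : ∀ s ∈ S, 0 < max (a - (l - s)) (l - s - b) := by
    intro s hs
    by_contra! hle
    exact hl' ⟨l - s, ⟨by linarith [le_max_left (a - (l - s)) (l - s - b)],
      by linarith [le_max_right (a - (l - s)) (l - s - b)]⟩, s, hs, by ring⟩
  obtain ⟨δ, hδ, hδS⟩ := hS.exists_forall_le' (by fun_prop) hout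
  -- split `ψ` according to whether `l - ω n` lies above `b + δ` or below `a - δ`
  set P : Set ι := {n | b + δ ≤ l - ω n}
  have hT : IsSelfAdjoint (algebraMap ℝ (ℓ²(ι) →L[ℝ] ℓ²(ι)) l - H') :=
    ((IsSelfAdjoint.all l).algebraMap _).sub hH'
  have hform : ∀ u, ⟪(algebraMap ℝ _ l - H') u, u⟫_ℝ
      = l * ‖u‖ ^ 2 - ⟪H u, u⟫_ℝ - ⟪(H' - H) u, u⟫_ℝ := by
    intro u
    rw [inner_algebraMap_sub_apply_self, sub_apply, inner_sub_left]
    ring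
  have hbound : ∀ ψ, δ * ‖ψ‖ ≤ ‖(algebraMap ℝ _ l - H') ψ‖ := by
    intro ψ
    rw [← indicator_add_indicator_compl P ψ]
    refine mul_norm_le_norm_apply_add_of_inner_eq_zero hT
      (inner_indicator_indicator_compl P ψ) ?_ ?_
    · have := inner_apply_self_le_of_diag hV (c := l - b - δ) (u := indicator P ψ) fun n hn => by
        have hnP : n ∈ P := by by_contra h; simp [h] at hn
        simp only [P, Set.mem_ofPred_eq] at hnP
        linarith
      rw [hform]
      linarith [hHb (indicator P ψ)]
    · have := le_inner_apply_self_of_diag hV (c := l - a + δ) (u := indicator Pᶜ ψ) fun n hn => by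
        have hnP : n ∉ P := by by_contra h; simp [h] at hn
        simp only [P, Set.mem_ofPred_eq, not_le] at hnP
        rcases le_max_iff.mp (hδS (ω n) (hωS n)) with h | h <;> linarith
      rw [hform]
      linarith [hHa (indicator Pᶜ ψ)]
  exact spectrum.mem_iff.mp hl (isUnit_of_forall_mul_norm_le_norm_apply hT hδ hbound)

end lp

lemma MeasureTheory.ae_forall_apply_mem_of_measure_cylinder {ι α : Type*} [Countable ι]
    [MeasurableSpace α] {ν : Measure α} {ν' : Measure (ι → α)}
    (hν' : ∀ (F : Finset ι) (t : ι → Set α), (∀ i, MeasurableSet (t i)) →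
      ν' {ω | ∀ i ∈ F, ω i ∈ t i} = ∏ i ∈ F, ν (t i))
    {s : Set α} (hs : MeasurableSet s) (hνs : ν sᶜ = 0) : ∀ᵐ ω ∂ν', ∀ i, ω i ∈ s := by
  refine ae_all_iff.mpr fun i => ?_
  simpa [ae_iff, hνs] using hν' {i} (fun _ => sᶜ) fun _ => hs.compl

theorem sum_subset_perturbed_spectrum_general
    {X : Type*} [MetricSpace X]
    [MeasurableSpace X]
    -- `T` is a homeomorphism of `X`
    (T : X ≃ₜ X)
    -- `μ` is an ergodic Borel probability measure with full topological support
    (μ : Measure X) [IsProbabilityMeasure μ]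
    -- the continuous sampling function
    (f : C(X, ℝ))
    -- the unperturbed Schrödinger operators `H_x` on `ℓ²(ℤ)`
    (H : X → (lp (fun _ : ℤ => ℝ) 2 →L[ℝ] lp (fun _ : ℤ => ℝ) 2))
    (hH : ∀ (x : X) (ψ : lp (fun _ : ℤ => ℝ) 2) (n : ℤ),
      (H x ψ) n = ψ (n + 1) + ψ (n - 1) + f ((T.toEquiv ^ n) x) * ψ n)
    (hHsa : ∀ x, IsSelfAdjoint (H x))
    -- the unperturbed almost sure spectrum `Λ₀`
    (Λ₀ : Set ℝ)
    (hΛ₀ : ∀ᵐ x ∂μ, spectrum ℝ (H x) = Λ₀)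
    -- the single-site measure `ν` with compact support `S` containing at least two points
    (ν : Measure ℝ)
    (S : Set ℝ) (hS : S = {v : ℝ | ∀ U ∈ 𝓝 v, ν U ≠ 0})
    (hScompact : IsCompact S)
    -- `ν'` is the product measure `ν^ℤ` on `ℝ^ℤ`
    (ν' : Measure (ℤ → ℝ)) [IsProbabilityMeasure ν']
    (hν' : ∀ (F : Finset ℤ) (t : ℤ → Set ℝ), (∀ i, MeasurableSet (t i)) →
      ν' {ω | ∀ i ∈ F, ω i ∈ t i} = ∏ i ∈ F, ν (t i))
    -- the perturbed Schrödinger operators `H_{x,ω}` on `ℓ²(ℤ)`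
    (H' : X → (ℤ → ℝ) → (lp (fun _ : ℤ => ℝ) 2 →L[ℝ] lp (fun _ : ℤ => ℝ) 2))
    (hH' : ∀ (x : X) (ω : ℤ → ℝ), (∀ n, ω n ∈ S) →
      ∀ (ψ : lp (fun _ : ℤ => ℝ) 2) (n : ℤ),
        (H' x ω ψ) n = ψ (n + 1) + ψ (n - 1) + (f ((T.toEquiv ^ n) x) + ω n) * ψ n)
    (hH'sa : ∀ x ω, (∀ n, ω n ∈ S) → IsSelfAdjoint (H' x ω))
    -- the perturbed almost sure spectrum `Λ₁`
    (Λ₁ : Set ℝ)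
    (hΛ₁ : ∀ᵐ p ∂(μ.prod ν'), spectrum ℝ (H' p.1 p.2) = Λ₁) :
    Λ₁ ⊆ (Λ₀ + Set.Icc (sInf S) (sSup S)) ∩ (Set.Icc (sInf Λ₀) (sSup Λ₀) + S) := by
  have hνS : ν Sᶜ = 0 := by
    have hsupp : S = ν.support := by
      ext v
      simp [hS, Measure.mem_support_iff_forall, pos_iff_ne_zero]
    exact hsupp ▸ Measure.measure_compl_support
  have hων : ∀ᵐ ω ∂ν', ∀ n, ω n ∈ S :=
    ae_forall_apply_mem_of_measure_cylinder hν' hScompact.isClosed.measurableSet hνS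
  obtain ⟨⟨x, ω⟩, hΛ₁x, hΛ₀x, hωS⟩ := (hΛ₁.and ((Measure.quasiMeasurePreserving_fst.ae hΛ₀).and
    (Measure.quasiMeasurePreserving_snd.ae hων))).exists
  have hV : ∀ ψ n, (H' x ω - H x) ψ n = ω n * ψ n := by
    intro ψ n
    rw [sub_apply, lp.coeFn_sub, Pi.sub_apply, hH' x ω hωS, hH]
    ring
  rw [← hΛ₁x, ← hΛ₀x]
  exact Set.subset_inter
    (lp.spectrum_subset_add_Icc_of_diag (hHsa x) (hH'sa x ω hωS) hV fun n =>
      ⟨csInf_le hScompact.bddBelow (hωS n), le_csSup hScompact.bddAbove (hωS n)⟩)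
    (lp.spectrum_subset_Icc_add_of_diag (hHsa x) (hH'sa x ω hωS) hV hScompact hωS)

/-- **Statement 4.** In the setting of an ergodic Schrödinger operator with an Anderson-type
random perturbation, the Minkowski sum `Λ₀ + S` of the unperturbed almost sure spectrum
and the support of the single-site measure is contained in the perturbed almost sure
spectrum `Λ₁`. -/
theorem sum_subset_perturbed_spectrum
    {X : Type*} [MetricSpace X] [CompactSpace X] [Nonempty X]
    [MeasurableSpace X] [BorelSpace X]
    -- `T` is a homeomorphism of `X`
    (T : X ≃ₜ X)
    -- `μ` is an ergodic Borel probability measure with full topological support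
    (μ : Measure X) [IsProbabilityMeasure μ]
    (hT : Ergodic T μ)
    (hfull : ∀ U : Set X, IsOpen U → U.Nonempty → μ U ≠ 0)
    -- the continuous sampling function
    (f : C(X, ℝ))
    -- the unperturbed Schrödinger operators `H_x` on `ℓ²(ℤ)`
    (H : X → (lp (fun _ : ℤ => ℝ) 2 →L[ℝ] lp (fun _ : ℤ => ℝ) 2))
    (hH : ∀ (x : X) (ψ : lp (fun _ : ℤ => ℝ) 2) (n : ℤ),
      (H x ψ) n = ψ (n + 1) + ψ (n - 1) + f ((T.toEquiv ^ n) x) * ψ n)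
    (hHsa : ∀ x, IsSelfAdjoint (H x))
    -- the unperturbed almost sure spectrum `Λ₀`
    (Λ₀ : Set ℝ) (hΛ₀compact : IsCompact Λ₀)
    (hΛ₀ : ∀ᵐ x ∂μ, spectrum ℝ (H x) = Λ₀)
    -- the single-site measure `ν` with compact support `S` containing at least two points
    (ν : Measure ℝ) [IsProbabilityMeasure ν]
    (S : Set ℝ) (hS : S = {v : ℝ | ∀ U ∈ 𝓝 v, ν U ≠ 0})
    (hScompact : IsCompact S) (hStwo : S.Nontrivial)
    -- `ν'` is the product measure `ν^ℤ` on `ℝ^ℤ`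
    (ν' : Measure (ℤ → ℝ)) [IsProbabilityMeasure ν']
    (hν' : ∀ (F : Finset ℤ) (t : ℤ → Set ℝ), (∀ i, MeasurableSet (t i)) →
      ν' {ω | ∀ i ∈ F, ω i ∈ t i} = ∏ i ∈ F, ν (t i))
    -- the perturbed Schrödinger operators `H_{x,ω}` on `ℓ²(ℤ)`
    (H' : X → (ℤ → ℝ) → (lp (fun _ : ℤ => ℝ) 2 →L[ℝ] lp (fun _ : ℤ => ℝ) 2))
    (hH' : ∀ (x : X) (ω : ℤ → ℝ), (∀ n, ω n ∈ S) →
      ∀ (ψ : lp (fun _ : ℤ => ℝ) 2) (n : ℤ),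
        (H' x ω ψ) n = ψ (n + 1) + ψ (n - 1) + (f ((T.toEquiv ^ n) x) + ω n) * ψ n)
    (hH'sa : ∀ x ω, (∀ n, ω n ∈ S) → IsSelfAdjoint (H' x ω))
    -- the perturbed almost sure spectrum `Λ₁`
    (Λ₁ : Set ℝ) (hΛ₁compact : IsCompact Λ₁)
    (hΛ₁ : ∀ᵐ p ∂(μ.prod ν'), spectrum ℝ (H' p.1 p.2) = Λ₁) :
    Λ₁ ⊆ (Λ₀ + Set.Icc (sInf S) (sSup S)) ∩ (Set.Icc (sInf Λ₀) (sSup Λ₀) + S) :=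
  sum_subset_perturbed_spectrum_general T μ f H hH hHsa Λ₀ hΛ₀ ν S hS hScompact ν' hν' H' hH' hH'sa
    Λ₁ hΛ₁
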